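/- Let G be a stratified Lie group with dyadic cube system D = ∪_k D_k, where each R ∈ D_k satisfies B(c_R, γ₁2^{−k}) ⊆ R ⊆ B(c_R, γ₂2^{−k}). Suppose the kernel K satisfies the non-degenerate ball condition: for each ball B(x₀,r) there exists a ball B(y₀,r) with A₃r ≤ ρ(x₀⁻¹y₀) ≤ A₄r, where A₄ ≥ A₃ ≥ 2A₀, on which K has constant sign and |K(x,y)| ≳ r^{−Q} for (x,y) ∈ B(x₀,r)×B(y₀,r). Then there exist constants A₄' ≥ A₃' ≥ 2A₀ such that for every cube R ∈ D_k there is a cube R̃ ∈ D_k with A₃'2^{−k} ≤ ρ(c_R⁻¹c_{R̃}) ≤ A₄'2^{−k}, K(x,y) does not change sign on R × R̃, and |K(x,y)| ≳ |R|^{−1} for all (x,y) ∈ R × R̃. -/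

import Mathlib

/-!
Take the quasi-ball around `c_R` of radius `r = M 2^{-k}`, with `M = 2A₀(γ₂ + 1)` large enough
that it contains `R`, and let `B(y₀, r)` be its partner ball from the non-degeneracy condition.
Some cube `R̃ ∈ D_k` has its center within `γ₂ 2^{-k}` of `y₀`, so the quasi-triangle inequality
puts `R̃` inside `B(y₀, r)`: the sign and size of `K` transfer from the balls to `R × R̃`, and
`|R| ≳ 2^{-kQ} = M^{-Q} r^Q` turns `|K| ≳ r^{-Q}` into `|K| |R| ≳ 1`. The same inequality, applied
through `y₀`, bounds `ρ(c_R⁻¹ c_R̃)` above and below by multiples of `2^{-k}`.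
-/

open MeasureTheory

section QuasiNorm

variable {G : Type*} [Group G] {ρ : G → ℝ} {A₀ : ℝ}

def qball (ρ : G → ℝ) (x : G) (r : ℝ) : Set G := {y | ρ (y⁻¹ * x) < r}

theorem qball_mono {x : G} {r r' : ℝ} (h : r ≤ r') : qball ρ x r ⊆ qball ρ x r' :=
  fun _ hy => lt_of_lt_of_le hy h

theorem rho_inv_mul_comm (hsym : ∀ x : G, ρ x⁻¹ = ρ x) (x y : G) :
    ρ (x⁻¹ * y) = ρ (y⁻¹ * x) := by
  rw [← hsym, mul_inv_rev, inv_inv]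

theorem rho_inv_mul_le (hquasi : ∀ x y : G, ρ (x * y) ≤ A₀ * (ρ x + ρ y)) (x y z : G) :
    ρ (x⁻¹ * z) ≤ A₀ * (ρ (x⁻¹ * y) + ρ (y⁻¹ * z)) := by
  simpa [mul_assoc] using hquasi (x⁻¹ * y) (y⁻¹ * z)

theorem rho_inv_mul_le_of_le (hA₀ : 0 ≤ A₀)
    (hquasi : ∀ x y : G, ρ (x * y) ≤ A₀ * (ρ x + ρ y)) {x y z : G} {a b : ℝ}
    (hxz : ρ (x⁻¹ * z) ≤ a) (hzy : ρ (z⁻¹ * y) ≤ b) : ρ (x⁻¹ * y) ≤ A₀ * (a + b) :=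
  (rho_inv_mul_le hquasi x z y).trans (by gcongr)

theorem two_mul_sub_le_rho_inv_mul (hA₀ : 0 < A₀)
    (hquasi : ∀ x y : G, ρ (x * y) ≤ A₀ * (ρ x + ρ y)) {x y z : G} {A r δ : ℝ}
    (hA : 2 * A₀ ≤ A) (hr : 0 ≤ r) (hxz : A * r ≤ ρ (x⁻¹ * z)) (hyz : ρ (y⁻¹ * z) ≤ δ) :
    2 * r - δ ≤ ρ (x⁻¹ * y) := by
  refine le_of_mul_le_mul_left ?_ hA₀
  nlinarith [rho_inv_mul_le hquasi x y z, mul_le_mul_of_nonneg_right hA hr,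
    mul_le_mul_of_nonneg_left hyz hA₀.le]

theorem mem_qball_of_mem_qball_of_le (hA₀ : 0 < A₀)
    (hquasi : ∀ x y : G, ρ (x * y) ≤ A₀ * (ρ x + ρ y)) {y c z : G} {a : ℝ}
    (hy : y ∈ qball ρ c a) (hc : ρ (c⁻¹ * z) ≤ a) : y ∈ qball ρ z (2 * A₀ * a) :=
  calc ρ (y⁻¹ * z) ≤ A₀ * (ρ (y⁻¹ * c) + ρ (c⁻¹ * z)) := rho_inv_mul_le hquasi y c z
    _ < A₀ * (a + a) := mul_lt_mul_of_pos_left (add_lt_add_of_lt_of_le hy hc) hA₀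
    _ = 2 * A₀ * a := by ring

end QuasiNorm

theorem two_rpow_neg_mul_eq (k : ℤ) (Q : ℝ) :
    (2 : ℝ) ^ (-(k : ℝ) * Q) = ((2 : ℝ) ^ (-k)) ^ Q := by
  rw [Real.rpow_mul zero_le_two, ← Real.rpow_intCast, Int.cast_neg]

theorem ofReal_div_rpow_le_mul {m : ENNReal} {a b c M s Q : ℝ} (hM : 0 < M) (hs : 0 < s)
    (ha : 0 ≤ a) (hb : a / (M * s) ^ Q ≤ b) (hm : ENNReal.ofReal (c * s ^ Q) ≤ m) :
    ENNReal.ofReal (a * c / M ^ Q) ≤ ENNReal.ofReal b * m := by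
  have hsQ : 0 < s ^ Q := Real.rpow_pos_of_pos hs Q
  have hsplit : a * c / M ^ Q = a / (M * s) ^ Q * (c * s ^ Q) := by
    rw [Real.mul_rpow hM.le hs.le]
    field_simp
  rw [hsplit, ENNReal.ofReal_mul (by positivity)]
  exact mul_le_mul' (ENNReal.ofReal_le_ofReal hb) hm

theorem stmt13_general {G : Type*} [Group G] [MeasurableSpace G] (μ : Measure G)
    (ρ : G → ℝ) (K : G → G → ℝ) (A₀ γ₁ γ₂ Qd c₁ A₃ A₄ cK : ℝ)
    (D : ℤ → Set (Set G)) (center : Set G → G)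
    (hA₀ : 1 ≤ A₀) (hγ₁ : 0 < γ₁) (hγ : γ₁ ≤ γ₂)
    (hc₁ : 0 < c₁)
    (hquasi : ∀ x y : G, ρ (x * y) ≤ A₀ * (ρ x + ρ y))
    (hsym : ∀ x : G, ρ x⁻¹ = ρ x)
    -- each cube R ∈ D_k satisfies B(c_R, γ₁2^{−k}) ⊆ R ⊆ B(c_R, γ₂2^{−k})
    (hcube : ∀ k : ℤ, ∀ R ∈ D k,
      {y : G | ρ (y⁻¹ * center R) < γ₁ * (2 : ℝ) ^ (-k)} ⊆ R ∧
      R ⊆ {y : G | ρ (y⁻¹ * center R) < γ₂ * (2 : ℝ) ^ (-k)})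
    -- every point is within γ₂2^{−k} of the center of some cube of D_k
    (hcover : ∀ (k : ℤ) (x : G), ∃ R ∈ D k, ρ (x⁻¹ * center R) ≤ γ₂ * (2 : ℝ) ^ (-k))
    -- |R| ≃ 2^{−kQ}
    (hvol₁ : ∀ k : ℤ, ∀ R ∈ D k,
      ENNReal.ofReal (c₁ * (2 : ℝ) ^ (-(k : ℝ) * Qd)) ≤ μ R)
    -- the non-degenerate condition for balls
    (h₃₄ : 2 * A₀ ≤ A₃) (hA₃₄ : A₃ ≤ A₄) (hcK : 0 < cK)
    (hnondeg : ∀ (x₀ : G) (r : ℝ), 0 < r → ∃ y₀ : G,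
      A₃ * r ≤ ρ (x₀⁻¹ * y₀) ∧ ρ (x₀⁻¹ * y₀) ≤ A₄ * r ∧
      ((∀ x, ρ (x⁻¹ * x₀) < r → ∀ y, ρ (y⁻¹ * y₀) < r → 0 ≤ K x y) ∨
       (∀ x, ρ (x⁻¹ * x₀) < r → ∀ y, ρ (y⁻¹ * y₀) < r → K x y ≤ 0)) ∧
      (∀ x, ρ (x⁻¹ * x₀) < r → ∀ y, ρ (y⁻¹ * y₀) < r → cK / r ^ Qd ≤ |K x y|)) :
    ∃ A₃' A₄' c' : ℝ, 2 * A₀ ≤ A₃' ∧ A₃' ≤ A₄' ∧ 0 < c' ∧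
      ∀ k : ℤ, ∀ R ∈ D k, ∃ Rt ∈ D k,
        A₃' * (2 : ℝ) ^ (-k) ≤ ρ ((center R)⁻¹ * center Rt) ∧
        ρ ((center R)⁻¹ * center Rt) ≤ A₄' * (2 : ℝ) ^ (-k) ∧
        ((∀ x ∈ R, ∀ y ∈ Rt, 0 ≤ K x y) ∨ (∀ x ∈ R, ∀ y ∈ Rt, K x y ≤ 0)) ∧
        (∀ x ∈ R, ∀ y ∈ Rt, ENNReal.ofReal c' ≤ ENNReal.ofReal |K x y| * μ R) := by
  have hγ₂ : 0 < γ₂ := hγ₁.trans_le hγ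
  have hA₀' : 0 < A₀ := by linarith
  set M := 2 * A₀ * (γ₂ + 1)
  have hγM : γ₂ ≤ M := by nlinarith
  have h2γM : 2 * A₀ * γ₂ ≤ M := by nlinarith
  have hA₀A₄ : 2 * M ≤ A₀ * A₄ * M := by gcongr; nlinarith
  refine ⟨2 * M - γ₂, A₀ * (A₄ * M + γ₂), cK * c₁ / M ^ Qd, by nlinarith, by nlinarith,
    by positivity, fun k R hR => ?_⟩
  set s : ℝ := 2 ^ (-k)
  have hs : 0 < s := by positivity
  obtain ⟨y₀, hlow, hhigh, hsign, hsize⟩ := hnondeg (center R) (M * s) (by positivity)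
  obtain ⟨Rt, hRt, hy₀Rt⟩ := hcover k y₀
  have hRtcy₀ : ρ ((center Rt)⁻¹ * y₀) ≤ γ₂ * s := rho_inv_mul_comm hsym _ y₀ ▸ hy₀Rt
  have hR_sub : R ⊆ qball ρ (center R) (M * s) :=
    (hcube k R hR).2.trans (qball_mono (by gcongr))
  have hRt_sub : Rt ⊆ qball ρ y₀ (M * s) := fun y hy =>
    qball_mono (by rw [← mul_assoc]; gcongr)
      (mem_qball_of_mem_qball_of_le hA₀' hquasi ((hcube k Rt hRt).2 hy) hRtcy₀)
  refine ⟨Rt, hRt, ?_, ?_, hsign.imp (fun h x hx y hy => h x (hR_sub hx) y (hRt_sub hy))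
    (fun h x hx y hy => h x (hR_sub hx) y (hRt_sub hy)), fun x hx y hy =>
    ofReal_div_rpow_le_mul (by positivity) hs hcK.le (hsize x (hR_sub hx) y (hRt_sub hy))
      (two_rpow_neg_mul_eq k Qd ▸ hvol₁ k R hR)⟩
  · calc (2 * M - γ₂) * s = 2 * (M * s) - γ₂ * s := by ring
      _ ≤ _ := two_mul_sub_le_rho_inv_mul hA₀' hquasi h₃₄ (by positivity) hlow hRtcy₀
  · calc _ ≤ A₀ * (A₄ * (M * s) + γ₂ * s) := rho_inv_mul_le_of_le hA₀'.le hquasi hhigh hy₀Rt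
      _ = A₀ * (A₄ * M + γ₂) * s := by ring

/-- Lemma 2.1 of the paper: the non-degenerate condition on balls transfers to the dyadic
cube system. For each cube R ∈ D_k there is a cube R̃ ∈ D_k with
A₃'2^{−k} ≤ ρ(c_R⁻¹ c_{R̃}) ≤ A₄'2^{−k}, on which K does not change sign and
|K(x,y)| ≳ |R|⁻¹ for all (x,y) ∈ R × R̃. -/
theorem stmt13 {G : Type*} [Group G] [MeasurableSpace G] (μ : Measure G)
    (ρ : G → ℝ) (K : G → G → ℝ) (A₀ γ₁ γ₂ Qd c₁ c₂ A₃ A₄ cK : ℝ)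
    (D : ℤ → Set (Set G)) (center : Set G → G)
    (hA₀ : 1 ≤ A₀) (hγ₁ : 0 < γ₁) (hγ : γ₁ ≤ γ₂) (hQd : 0 < Qd)
    (hc₁ : 0 < c₁) (hc₂ : c₁ ≤ c₂)
    (hquasi : ∀ x y : G, ρ (x * y) ≤ A₀ * (ρ x + ρ y))
    (hsym : ∀ x : G, ρ x⁻¹ = ρ x) (hnn : ∀ x : G, 0 ≤ ρ x)
    -- each cube R ∈ D_k satisfies B(c_R, γ₁2^{−k}) ⊆ R ⊆ B(c_R, γ₂2^{−k})
    (hcube : ∀ k : ℤ, ∀ R ∈ D k,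
      {y : G | ρ (y⁻¹ * center R) < γ₁ * (2 : ℝ) ^ (-k)} ⊆ R ∧
      R ⊆ {y : G | ρ (y⁻¹ * center R) < γ₂ * (2 : ℝ) ^ (-k)})
    -- every point is within γ₂2^{−k} of the center of some cube of D_k
    (hcover : ∀ (k : ℤ) (x : G), ∃ R ∈ D k, ρ (x⁻¹ * center R) ≤ γ₂ * (2 : ℝ) ^ (-k))
    -- |R| ≃ 2^{−kQ}
    (hvol₁ : ∀ k : ℤ, ∀ R ∈ D k,
      ENNReal.ofReal (c₁ * (2 : ℝ) ^ (-(k : ℝ) * Qd)) ≤ μ R)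
    (hvol₂ : ∀ k : ℤ, ∀ R ∈ D k,
      μ R ≤ ENNReal.ofReal (c₂ * (2 : ℝ) ^ (-(k : ℝ) * Qd)))
    -- the non-degenerate condition for balls
    (h₃₄ : 2 * A₀ ≤ A₃) (hA₃₄ : A₃ ≤ A₄) (hcK : 0 < cK)
    (hnondeg : ∀ (x₀ : G) (r : ℝ), 0 < r → ∃ y₀ : G,
      A₃ * r ≤ ρ (x₀⁻¹ * y₀) ∧ ρ (x₀⁻¹ * y₀) ≤ A₄ * r ∧
      ((∀ x, ρ (x⁻¹ * x₀) < r → ∀ y, ρ (y⁻¹ * y₀) < r → 0 ≤ K x y) ∨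
       (∀ x, ρ (x⁻¹ * x₀) < r → ∀ y, ρ (y⁻¹ * y₀) < r → K x y ≤ 0)) ∧
      (∀ x, ρ (x⁻¹ * x₀) < r → ∀ y, ρ (y⁻¹ * y₀) < r → cK / r ^ Qd ≤ |K x y|)) :
    ∃ A₃' A₄' c' : ℝ, 2 * A₀ ≤ A₃' ∧ A₃' ≤ A₄' ∧ 0 < c' ∧
      ∀ k : ℤ, ∀ R ∈ D k, ∃ Rt ∈ D k,
        A₃' * (2 : ℝ) ^ (-k) ≤ ρ ((center R)⁻¹ * center Rt) ∧
        ρ ((center R)⁻¹ * center Rt) ≤ A₄' * (2 : ℝ) ^ (-k) ∧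
        ((∀ x ∈ R, ∀ y ∈ Rt, 0 ≤ K x y) ∨ (∀ x ∈ R, ∀ y ∈ Rt, K x y ≤ 0)) ∧
        (∀ x ∈ R, ∀ y ∈ Rt, ENNReal.ofReal c' ≤ ENNReal.ofReal |K x y| * μ R) :=
  stmt13_general μ ρ K A₀ γ₁ γ₂ Qd c₁ A₃ A₄ cK D center hA₀ hγ₁ hγ hc₁ hquasi hsym hcube hcover
    hvol₁ h₃₄ hA₃₄ hcK hnondeg
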